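/- Let A ∈ ℂ^{n×n} and B ∈ ℂ^{m×m}. The continuous Sylvester equation AX + XB = C has a unique solution X ∈ ℂ^{n×m} for every right-hand side C ∈ ℂ^{n×m} (equivalently, the linear map X ↦ AX + XB on ℂ^{n×m} is bijective) if and only if A and −B have no common eigenvalue, i.e., the spectrum of A and the spectrum of −B are disjoint. -/

import Mathlib

/-!
If `AY = Y(-B)` then `p(A) Y = Y p(-B)` for every polynomial `p`; taking `p` the characteristic
polynomial of `A` kills the left side, while by the spectral mapping theorem `p(-B)` is invertible
as soon as no eigenvalue of `-B` is a root of `p`. So disjoint spectra force `Y = 0`, i.e.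
`X ↦ AX + XB` is injective, hence bijective by finite dimensionality. Conversely, from `Av = μv`
and `wᵀB = -μwᵀ` the rank-one matrix `vwᵀ` is a nonzero solution of `AY + YB = 0`.
-/

open Matrix Polynomial

theorem isUnit_aeval_of_forall_mem_spectrum_not_isRoot {K S : Type*} [Field K] [IsAlgClosed K]
    [Ring S] [Algebra K S] [FiniteDimensional K S] {a : S} {p : K[X]}
    (h : ∀ μ ∈ spectrum K a, ¬p.IsRoot μ) : IsUnit (aeval a p) := by
  nontriviality S
  by_contra hp
  have hspec := spectrum.map_polynomial_aeval_of_nonempty a p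
    (spectrum.nonempty_of_isAlgClosed_of_finiteDimensional K a)
  obtain ⟨μ, hμ, hroot⟩ := hspec.subset ((spectrum.zero_mem_iff K).mpr hp)
  exact h μ hμ hroot

namespace Matrix

variable {n m : Type*} [Fintype n] [Fintype m]

section CommRing

variable {R : Type*} [CommRing R]

theorem aeval_mul_eq_mul_aeval_of_mul_eq_mul [DecidableEq n] [DecidableEq m]
    {A : Matrix n n R} {B : Matrix m m R} {Y : Matrix n m R} (h : A * Y = Y * B) (p : R[X]) :
    aeval A p * Y = Y * aeval B p := by
  have hpow : ∀ k : ℕ, A ^ k * Y = Y * B ^ k := by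
    intro k
    induction k with
    | zero => simp
    | succ k ih => rw [pow_succ, Matrix.mul_assoc, h, ← Matrix.mul_assoc, ih, Matrix.mul_assoc,
        ← pow_succ]
  simp only [aeval_eq_sum_range, Matrix.sum_mul, Matrix.mul_sum, Matrix.smul_mul, Matrix.mul_smul,
    hpow]

def sylvester (A : Matrix n n R) (B : Matrix m m R) : Matrix n m R →ₗ[R] Matrix n m R where
  toFun X := A * X + X * B
  map_add' X Y := by simp only [Matrix.mul_add, Matrix.add_mul]; abel
  map_smul' c X := by simp only [Matrix.mul_smul, smul_mul, RingHom.id_apply, smul_add]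

theorem injective_sylvester_iff (A : Matrix n n R) (B : Matrix m m R) :
    Function.Injective (sylvester A B) ↔ ∀ Y : Matrix n m R, A * Y = Y * -B → Y = 0 := by
  rw [injective_iff_map_eq_zero]
  simp only [sylvester, LinearMap.coe_mk, AddHom.coe_mk, Matrix.mul_neg, add_eq_zero_iff_eq_neg]

end CommRing

variable {K : Type*} [Field K] [DecidableEq n] [DecidableEq m]

theorem det_scalar_sub_eq_zero_of_mem_spectrum {A : Matrix n n K} {μ : K}
    (h : μ ∈ spectrum K A) : (scalar n μ - A).det = 0 := by
  rw [← eval_charpoly]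
  exact mem_spectrum_iff_isRoot_charpoly.mp h

theorem exists_mulVec_eq_smul_of_mem_spectrum {A : Matrix n n K} {μ : K}
    (h : μ ∈ spectrum K A) : ∃ v ≠ 0, A *ᵥ v = μ • v := by
  obtain ⟨v, hv, hker⟩ :=
    exists_mulVec_eq_zero_iff.mpr (det_scalar_sub_eq_zero_of_mem_spectrum h)
  refine ⟨v, hv, ?_⟩
  rw [sub_mulVec, sub_eq_zero, scalar_apply] at hker
  ext i
  simp [← hker, mulVec_diagonal]

theorem exists_vecMul_eq_smul_of_mem_spectrum {A : Matrix n n K} {μ : K}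
    (h : μ ∈ spectrum K A) : ∃ w ≠ 0, w ᵥ* A = μ • w := by
  obtain ⟨w, hw, hker⟩ :=
    exists_vecMul_eq_zero_iff.mpr (det_scalar_sub_eq_zero_of_mem_spectrum h)
  refine ⟨w, hw, ?_⟩
  rw [vecMul_sub, sub_eq_zero, scalar_apply] at hker
  ext i
  simp [← hker, vecMul_diagonal, mul_comm]

theorem exists_ne_zero_mul_eq_mul_of_mem_spectrum {A : Matrix n n K} {B : Matrix m m K} {μ : K}
    (hA : μ ∈ spectrum K A) (hB : μ ∈ spectrum K B) :
    ∃ Y : Matrix n m K, Y ≠ 0 ∧ A * Y = Y * B := by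
  obtain ⟨v, hv, hAv⟩ := exists_mulVec_eq_smul_of_mem_spectrum hA
  obtain ⟨w, hw, hwB⟩ := exists_vecMul_eq_smul_of_mem_spectrum hB
  obtain ⟨i, hi⟩ := Function.ne_iff.mp hv
  obtain ⟨j, hj⟩ := Function.ne_iff.mp hw
  refine ⟨vecMulVec v w, fun h0 => mul_ne_zero hi hj (congrFun (congrFun h0 i) j), ?_⟩
  rw [mul_vecMulVec, vecMulVec_mul, hAv, hwB, smul_vecMulVec, vecMulVec_smul]

theorem eq_zero_of_mul_eq_mul_of_disjoint_spectrum [IsAlgClosed K] {A : Matrix n n K}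
    {B : Matrix m m K} (hd : Disjoint (spectrum K A) (spectrum K B)) {Y : Matrix n m K}
    (h : A * Y = Y * B) : Y = 0 := by
  have hunit : IsUnit (aeval B A.charpoly) :=
    isUnit_aeval_of_forall_mem_spectrum_not_isRoot fun μ hμB hroot =>
      Set.disjoint_left.mp hd (mem_spectrum_iff_isRoot_charpoly.mpr hroot) hμB
  obtain ⟨Q, hQ⟩ := hunit.exists_right_inv
  calc Y = Y * aeval B A.charpoly * Q := by rw [Matrix.mul_assoc, hQ, Matrix.mul_one]
    _ = 0 := by rw [← aeval_mul_eq_mul_aeval_of_mul_eq_mul h, aeval_self_charpoly,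
      Matrix.zero_mul, Matrix.zero_mul]

theorem disjoint_spectrum_iff_forall_mul_eq_mul [IsAlgClosed K] (A : Matrix n n K)
    (B : Matrix m m K) :
    Disjoint (spectrum K A) (spectrum K B) ↔ ∀ Y : Matrix n m K, A * Y = Y * B → Y = 0 := by
  refine ⟨fun hd _ => eq_zero_of_mul_eq_mul_of_disjoint_spectrum hd, fun h => ?_⟩
  refine Set.disjoint_left.mpr fun μ hA hB => ?_
  obtain ⟨Y, hY, hAY⟩ := exists_ne_zero_mul_eq_mul_of_mem_spectrum hA hB
  exact hY (h Y hAY)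

theorem bijective_sylvester_iff_disjoint_spectrum [IsAlgClosed K] (A : Matrix n n K)
    (B : Matrix m m K) :
    Function.Bijective (sylvester A B) ↔ Disjoint (spectrum K A) (spectrum K (-B)) := by
  rw [disjoint_spectrum_iff_forall_mul_eq_mul, ← injective_sylvester_iff]
  exact ⟨Function.Bijective.injective,
    fun hinj => ⟨hinj, LinearMap.injective_iff_surjective.mp hinj⟩⟩

end Matrix

/-- The continuous Sylvester equation `AX + XB = C` has a unique solution for every
right-hand side `C` (equivalently, `X ↦ AX + XB` is bijective) if and only if the
spectra of `A` and `-B` are disjoint. -/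
theorem sylvester_unique_solution_iff_spectra_disjoint
    {n m : ℕ} (A : Matrix (Fin n) (Fin n) ℂ) (B : Matrix (Fin m) (Fin m) ℂ) :
    ((∀ C : Matrix (Fin n) (Fin m) ℂ, ∃! X : Matrix (Fin n) (Fin m) ℂ, A * X + X * B = C) ∧
      Function.Bijective (fun X : Matrix (Fin n) (Fin m) ℂ => A * X + X * B)) ↔
      Disjoint (spectrum ℂ A) (spectrum ℂ (-B)) := by
  rw [← Function.bijective_iff_existsUnique, and_self]
  exact bijective_sylvester_iff_disjoint_spectrum A B
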